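/- χ_L(S_n(3)) = (1 + o(1))·(4n)^{1/3} as n → ∞; that is, lim_{n→∞} χ_L(S_n(3)) / (4n)^{1/3} = 1. -/

import Mathlib

open SimpleGraph

/-- Distance from a vertex to a set of vertices, `d(u,S) = min {d(u,v) : v ∈ S}`. -/
noncomputable def distToSet {V : Type*} (G : SimpleGraph V) (u : V) (S : Set V) : ℕ :=
  sInf (G.dist u '' S)

/-- `c` is a locating coloring of `G` with `k` colors: a proper coloring such that any two
distinct vertices are resolved by some color class. -/
def IsLocatingColoring {V : Type*} (G : SimpleGraph V) {k : ℕ} (c : V → Fin k) : Prop :=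
  (∀ u v : V, G.Adj u v → c u ≠ c v) ∧
  ∀ u v : V, u ≠ v →
    ∃ i : Fin k, distToSet G u (c ⁻¹' {i}) ≠ distToSet G v (c ⁻¹' {i})

/-- The locating chromatic number `χ_L(G)`: the least `k` admitting a locating `k`-coloring. -/
noncomputable def locatingChromaticNumber {V : Type*} (G : SimpleGraph V) : ℕ :=
  sInf {k : ℕ | ∃ c : V → Fin k, IsLocatingColoring G c}

/-- The vertex set of the palm `S_n(a_1, …, a_n)`: a hub `none` and, for each leg
`i : Fin n` (representing leg `i+1`), vertices `j : Fin (a (i+1))`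
(vertex `some ⟨i, j⟩` represents `a_{i+1, j+1}`). -/
def PalmVert (n : ℕ) (a : ℕ → ℕ) : Type :=
  Option ((i : Fin n) × Fin (a ((i : ℕ) + 1)))

/-- The palm `S_n(a_1, …, a_n)`: the star `K_{1,n}` whose `i`-th edge has been subdivided
`a_i - 1` times; the hub is joined to the first vertex of each leg, and consecutive
vertices along a leg are adjacent. -/
def Palm (n : ℕ) (a : ℕ → ℕ) : SimpleGraph (PalmVert n a) :=
  SimpleGraph.fromRel fun u v =>
    match u, v with
    | none, some ⟨_, j⟩ => (j : ℕ) = 0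
    | some ⟨i, j⟩, some ⟨i', j'⟩ => (i : ℕ) = (i' : ℕ) ∧ (j' : ℕ) = (j : ℕ) + 1
    | _, _ => False

/-!
Lower bound: in a locating colouring with `k` colours, the distance vector of the vertex
`a_{i,1}` is determined by the colours of `a_{i,1}` and `a_{i,2}`, and by the colour of `a_{i,3}`
only when that colour class lies at distance at least `2` from the hub. If `A` colour classes lie
at distance exactly `1` from the hub and `B` at distance at least `2`, then `A + B + 1 ≤ k`, and
locating forces `n ≤ A · k · (B + 1) ≤ k³ / 4`.

Upper bound: colour the hub `0`, the first vertices of the legs from `{1, …, a}`, the third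
vertices from `{a + 1, …, a + b}` and each middle vertex with any of the `a + b - 1` colours
different from its two neighbours. If distinct legs get distinct colour triples, this colouring
is locating, so `χ_L(S_n(3)) ≤ a + b + 1` as soon as `n ≤ a b (a + b - 1)`; balancing
`a + b = m + 1` gives `χ_L ≤ m + 2` whenever `4n ≤ m³`. Hence
`(4n)^{1/3} ≤ χ_L(S_n(3)) ≤ (4n)^{1/3} + 4`.
-/

namespace SimpleGraph

variable {V : Type*} {G : SimpleGraph V}

theorem exists_walk_length_le_of_descent (D : V → V → ℕ)
    (hdesc : ∀ u v, u ≠ v → ∃ w, G.Adj u w ∧ D w v + 1 = D u v) (u v : V) :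
    ∃ p : G.Walk u v, p.length ≤ D u v := by
  induction h : D u v using Nat.strong_induction_on generalizing u with
  | _ d ih =>
    by_cases huv : u = v
    · subst huv
      exact ⟨Walk.nil, by simp⟩
    · obtain ⟨w, hadj, hw⟩ := hdesc u v huv
      obtain ⟨p, hp⟩ := ih (D w v) (by omega) w rfl
      exact ⟨Walk.cons hadj p, by simp only [Walk.length_cons]; omega⟩

theorem le_length_of_lipschitz (D : V → V → ℕ) (hself : ∀ v, D v v = 0)
    (hlip : ∀ u w v, G.Adj u w → D u v ≤ D w v + 1) {u v : V} (p : G.Walk u v) :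
    D u v ≤ p.length := by
  induction p with
  | nil => simp [hself]
  | cons h p ih => simpa only [Walk.length_cons] using (hlip _ _ _ h).trans (by omega)

theorem dist_eq_of_lipschitz_of_descent (D : V → V → ℕ) (hself : ∀ v, D v v = 0)
    (hlip : ∀ u w v, G.Adj u w → D u v ≤ D w v + 1)
    (hdesc : ∀ u v, u ≠ v → ∃ w, G.Adj u w ∧ D w v + 1 = D u v) (u v : V) :
    G.dist u v = D u v := by
  obtain ⟨p, hp⟩ := exists_walk_length_le_of_descent D hdesc u v
  obtain ⟨q, hq⟩ := p.reachable.exists_walk_length_eq_dist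
  exact le_antisymm ((dist_le p).trans hp) (hq ▸ le_length_of_lipschitz D hself hlip q)

end SimpleGraph

section distToSet

variable {V : Type*} {G : SimpleGraph V} {u v w : V} {S : Set V} {m : ℕ}

theorem distToSet_le_dist (hw : w ∈ S) : distToSet G u S ≤ G.dist u w :=
  Nat.sInf_le ⟨w, hw, rfl⟩

theorem distToSet_empty : distToSet G u ∅ = 0 := by
  simp [distToSet]

theorem le_distToSet (hS : S.Nonempty) (h : ∀ w ∈ S, m ≤ G.dist u w) : m ≤ distToSet G u S :=
  le_csInf (hS.image _) (by rintro _ ⟨w, hw, rfl⟩; exact h w hw)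

theorem exists_distToSet_eq (hS : S.Nonempty) : ∃ w ∈ S, distToSet G u S = G.dist u w := by
  obtain ⟨w, hw, he⟩ := Nat.sInf_mem (hS.image (G.dist u))
  exact ⟨w, hw, he.symm⟩

theorem distToSet_eq_zero_of_mem (hu : u ∈ S) : distToSet G u S = 0 :=
  Nat.eq_zero_of_le_zero ((distToSet_le_dist hu).trans_eq SimpleGraph.dist_self)

theorem one_le_distToSet_of_notMem (hG : G.Connected) (hS : S.Nonempty) (hv : v ∉ S) :
    1 ≤ distToSet G v S :=
  le_distToSet hS fun _ hw => hG.pos_dist_of_ne fun h => hv (h ▸ hw)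

theorem distToSet_ne_of_mem_of_notMem (hG : G.Connected) (hu : u ∈ S) (hv : v ∉ S) :
    distToSet G u S ≠ distToSet G v S := by
  have := one_le_distToSet_of_notMem hG ⟨u, hu⟩ hv
  rw [distToSet_eq_zero_of_mem hu]
  omega

def Resolves {α : Type*} (G : SimpleGraph V) (f : V → α) (u v : V) : Prop :=
  ∃ γ, distToSet G u (f ⁻¹' {γ}) ≠ distToSet G v (f ⁻¹' {γ})

theorem Resolves.symm {α : Type*} {f : V → α}
    (h : Resolves G f u v) : Resolves G f v u :=
  h.imp fun _ => Ne.symm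

theorem Resolves.finLift {f : V → ℕ} {k : ℕ} (hf : ∀ v, f v < k)
    (h : Resolves G f u v) :
    Resolves G (fun v => (⟨f v, hf v⟩ : Fin k)) u v := by
  obtain ⟨γ, hγ⟩ := h
  obtain ⟨w, hw⟩ : (f ⁻¹' {γ}).Nonempty := by
    by_contra hS
    rw [Set.not_nonempty_iff_eq_empty] at hS
    simp [hS, distToSet_empty] at hγ
  have hpre : (fun v => (⟨f v, hf v⟩ : Fin k)) ⁻¹' {⟨γ, hw ▸ hf w⟩} = f ⁻¹' {γ} := by
    ext
    simp [Fin.ext_iff]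
  exact ⟨_, hpre ▸ hγ⟩

end distToSet

namespace Palm

variable {n : ℕ} {a : ℕ → ℕ}

def hub : PalmVert n a := none

def leg (i : Fin n) (j : Fin (a (i + 1))) : PalmVert n a := some ⟨i, j⟩

theorem vert_cases {P : PalmVert n a → Prop} (hub : P hub) (leg : ∀ i j, P (leg i j))
    (u : PalmVert n a) : P u := by
  rcases u with _ | ⟨i, j⟩
  exacts [hub, leg i j]

def pathLength : PalmVert n a → PalmVert n a → ℕ
  | none, none => 0
  | none, some p => p.2 + 1
  | some p, none => p.2 + 1
  | some p, some q => if p.1 = q.1 then Nat.dist p.2 q.2 else p.2 + q.2 + 2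

@[simp] theorem pathLength_hub_hub : pathLength (hub : PalmVert n a) hub = 0 := rfl

@[simp] theorem pathLength_hub_leg (i : Fin n) (j : Fin (a (i + 1))) :
    pathLength hub (leg i j) = j + 1 := rfl

@[simp] theorem pathLength_leg_hub (i : Fin n) (j : Fin (a (i + 1))) :
    pathLength (leg i j) hub = j + 1 := rfl

theorem pathLength_leg_leg (i i' : Fin n) (j : Fin (a (i + 1))) (j' : Fin (a (i' + 1))) :
    pathLength (leg i j) (leg i' j') = if i = i' then Nat.dist j j' else j + j' + 2 :=
  rfl

@[simp] theorem pathLength_leg_leg_self (i : Fin n) (j j' : Fin (a (i + 1))) :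
    pathLength (leg i j) (leg i j') = Nat.dist j j' :=
  if_pos rfl

theorem pathLength_leg_leg_of_ne {i i' : Fin n} (h : i ≠ i') (j : Fin (a (i + 1)))
    (j' : Fin (a (i' + 1))) : pathLength (leg i j) (leg i' j') = j + j' + 2 :=
  if_neg h

theorem adj_hub_leg_iff {i : Fin n} {j : Fin (a (i + 1))} :
    (Palm n a).Adj hub (leg i j) ↔ (j : ℕ) = 0 := by
  refine (fromRel_adj _ _ _).trans ?_
  exact ⟨fun ⟨_, h⟩ => h.elim id False.elim, fun h => ⟨nofun, Or.inl h⟩⟩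

theorem adj_leg_leg_iff {i i' : Fin n} {j : Fin (a (i + 1))} {j' : Fin (a (i' + 1))} :
    (Palm n a).Adj (leg i j) (leg i' j') ↔ i = i' ∧ ((j' : ℕ) = j + 1 ∨ (j : ℕ) = j' + 1) := by
  refine (fromRel_adj _ _ _).trans ?_
  constructor
  · rintro ⟨-, ⟨h, h'⟩ | ⟨h, h'⟩⟩
    · exact ⟨Fin.ext h, Or.inl h'⟩
    · exact ⟨Fin.ext h.symm, Or.inr h'⟩
  · rintro ⟨rfl, h | h⟩
    · exact ⟨fun he => by cases he; omega, Or.inl ⟨rfl, h⟩⟩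
    · exact ⟨fun he => by cases he; omega, Or.inr ⟨rfl, h⟩⟩

theorem pathLength_le_of_adj {u w : PalmVert n a} (h : (Palm n a).Adj u w) (v : PalmVert n a) :
    pathLength u v ≤ pathLength w v + 1 := by
  induction u using vert_cases with
  | hub => induction w using vert_cases with
    | hub => exact absurd h ((Palm n a).loopless.irrefl _)
    | leg i' j' =>
      have := adj_hub_leg_iff.mp h
      induction v using vert_cases <;>
        simp only [pathLength_hub_hub, pathLength_hub_leg, pathLength_leg_hub,
          pathLength_leg_leg, Nat.dist] <;> (try split_ifs) <;> omega
  | leg i j => induction w using vert_cases with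
    | hub =>
      have := adj_hub_leg_iff.mp h.symm
      induction v using vert_cases <;>
        simp only [pathLength_hub_hub, pathLength_hub_leg, pathLength_leg_hub,
          pathLength_leg_leg, Nat.dist] <;> (try split_ifs) <;> omega
    | leg i' j' =>
      obtain ⟨rfl, h⟩ := adj_leg_leg_iff.mp h
      induction v using vert_cases <;>
        simp only [pathLength_leg_hub, pathLength_leg_leg, Nat.dist] <;> (try split_ifs) <;> omega

theorem exists_adj_leg_pathLength_succ_of_inward {i : Fin n} {j : Fin (a (i + 1))}
    {v : PalmVert n a} (hin : ∀ j', v = leg i j' → (j' : ℕ) < j) :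
    ∃ w, (Palm n a).Adj (leg i j) w ∧ pathLength w v + 1 = pathLength (leg i j) v := by
  rcases Nat.eq_zero_or_pos (j : ℕ) with hj | hj
  · refine ⟨hub, (adj_hub_leg_iff.mpr hj).symm, ?_⟩
    induction v using vert_cases with
    | hub => simp [hj]
    | leg l m =>
      by_cases hl : i = l
      · subst hl
        have := hin m rfl
        omega
      · simp [pathLength_leg_leg_of_ne hl, hj]
  · refine ⟨leg i ⟨j - 1, by omega⟩, adj_leg_leg_iff.mpr ⟨rfl, Or.inr (by simp; omega)⟩, ?_⟩
    induction v using vert_cases with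
    | hub =>
      simp
      omega
    | leg l m =>
      by_cases hl : i = l
      · subst hl
        have := hin m rfl
        simp only [pathLength_leg_leg_self, Nat.dist]
        omega
      · simp only [pathLength_leg_leg_of_ne hl]
        omega

theorem exists_adj_pathLength_succ {u v : PalmVert n a} (h : u ≠ v) :
    ∃ w, (Palm n a).Adj u w ∧ pathLength w v + 1 = pathLength u v := by
  induction u using vert_cases with
  | hub => induction v using vert_cases with
    | hub => exact absurd rfl h
    | leg i j => exact ⟨leg i ⟨0, j.pos⟩, adj_hub_leg_iff.mpr rfl, by simp [Nat.dist]⟩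
  | leg i j =>
    by_cases hout : ∃ j', v = leg i j' ∧ j < j'
    · obtain ⟨j', rfl, hj⟩ := hout
      refine ⟨leg i ⟨j + 1, by omega⟩, adj_leg_leg_iff.mpr ⟨rfl, Or.inl rfl⟩, ?_⟩
      simp only [pathLength_leg_leg_self, Nat.dist, Fin.lt_def] at hj ⊢
      omega
    push Not at hout
    exact exists_adj_leg_pathLength_succ_of_inward fun j' hv =>
      lt_of_le_of_ne (Fin.le_def.mp (hout j' hv)) fun hj =>
        h (hv.trans (congrArg (leg i) (Fin.ext hj))).symm

theorem pathLength_self (u : PalmVert n a) : pathLength u u = 0 := by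
  induction u using vert_cases <;> simp [Nat.dist]

theorem dist_eq (u v : PalmVert n a) : (Palm n a).dist u v = pathLength u v :=
  dist_eq_of_lipschitz_of_descent pathLength pathLength_self
    (fun _ _ v h => pathLength_le_of_adj h v) (fun _ _ h => exists_adj_pathLength_succ h) u v

theorem connected : (Palm n a).Connected :=
  (connected_iff _).mpr ⟨fun u v => (exists_walk_length_le_of_descent pathLength
    (fun _ _ h => exists_adj_pathLength_succ h) u v).elim fun p _ => p.reachable, ⟨hub⟩⟩

theorem leg_ne_leg {i i' : Fin n} (h : i ≠ i') (j : Fin (a (i + 1))) (j' : Fin (a (i' + 1))) :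
    leg i j ≠ leg i' j' :=
  fun he => h (congrArg Sigma.fst (Option.some.inj he))

theorem distToSet_le_pathLength {S : Set (PalmVert n a)} {u w : PalmVert n a} (hw : w ∈ S) :
    distToSet (Palm n a) u S ≤ pathLength u w :=
  dist_eq u w ▸ distToSet_le_dist hw

theorem pathLength_leg_le (i : Fin n) (j : Fin (a (i + 1))) (w : PalmVert n a) :
    pathLength (leg i j) w ≤ j + 1 + pathLength hub w := by
  induction w using vert_cases with
  | hub => simp
  | leg l m =>
    simp only [pathLength_leg_leg, pathLength_hub_leg, Nat.dist]
    split_ifs <;> omega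

theorem pathLength_leg_of_forall_ne {i : Fin n} {w : PalmVert n a}
    (hw : ∀ j', w ≠ leg i j') (j : Fin (a (i + 1))) :
    pathLength (leg i j) w = j + 1 + pathLength hub w := by
  induction w using vert_cases with
  | hub => simp
  | leg l m =>
    have hl : i ≠ l := by
      rintro rfl
      exact hw m rfl
    simp only [pathLength_leg_leg_of_ne hl, pathLength_hub_leg]
    omega

variable {S : Set (PalmVert n a)} {m : ℕ}

theorem distToSet_leg_le (hS : S.Nonempty) (i : Fin n) (j : Fin (a (i + 1))) :
    distToSet (Palm n a) (leg i j) S ≤ j + 1 + distToSet (Palm n a) hub S := by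
  obtain ⟨w, hw, he⟩ := exists_distToSet_eq (G := Palm n a) (u := hub) hS
  have := distToSet_le_dist (G := Palm n a) (u := leg i j) hw
  rw [he, dist_eq] at *
  have := pathLength_leg_le i j w
  omega

theorem le_distToSet_leg (hS : S.Nonempty) {i : Fin n} {j : Fin (a (i + 1))}
    (hleg : ∀ j', leg i j' ∈ S → m ≤ Nat.dist j j')
    (hhub : m ≤ j + 1 + distToSet (Palm n a) hub S) :
    m ≤ distToSet (Palm n a) (leg i j) S := by
  refine le_distToSet hS fun w hw => ?_
  rw [dist_eq]
  by_cases hleg' : ∃ j', w = leg i j'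
  · obtain ⟨j', rfl⟩ := hleg'
    simpa using hleg j' hw
  · push Not at hleg'
    have := distToSet_le_dist (G := Palm n a) (u := hub) hw
    rw [dist_eq] at this
    rw [pathLength_leg_of_forall_ne hleg']
    omega

end Palm

open Palm

section LevelColoring

variable {n a b : ℕ} {x y z : Fin n → ℕ}

def levelColor (x y z : Fin n → ℕ) : PalmVert n (fun _ => 3) → ℕ
  | none => 0
  | some ⟨i, j⟩ => ![x i, y i, z i] j

@[simp] theorem levelColor_hub : levelColor x y z hub = 0 := rfl

@[simp] theorem levelColor_leg (i : Fin n) (j : Fin 3) :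
    levelColor x y z (leg i j) = ![x i, y i, z i] j := rfl

structure IsLevelColoring (a b : ℕ) (x y z : Fin n → ℕ) : Prop where
  bounds : ∀ i, 1 ≤ x i ∧ x i ≤ a ∧ a < z i ∧ z i ≤ a + b ∧ y i ≤ a + b ∧ y i ≠ x i ∧ y i ≠ z i
  injective : Function.Injective fun i => (x i, y i, z i)

theorem IsLevelColoring.levelColor_lt (H : IsLevelColoring a b x y z)
    (v : PalmVert n fun _ => 3) : levelColor x y z v < a + b + 1 := by
  induction v using vert_cases with
  | hub => simp
  | leg i j =>
    have := H.bounds i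
    fin_cases j <;> simp <;> omega

theorem IsLevelColoring.two_le_distToSet_hub (H : IsLevelColoring a b x y z) {γ : ℕ}
    (hγ : a < γ) (hS : (levelColor x y z ⁻¹' {γ}).Nonempty) :
    2 ≤ distToSet (Palm n fun _ => 3) hub (levelColor x y z ⁻¹' {γ}) := by
  refine le_distToSet hS fun w hw => ?_
  rw [dist_eq]
  induction w using vert_cases with
  | hub =>
    simp at hw
    omega
  | leg i j =>
    have := H.bounds i
    fin_cases j <;> simp at hw ⊢
    omega

theorem le_distToSet_leg_levelColor {γ m : ℕ} (hS : (levelColor x y z ⁻¹' {γ}).Nonempty)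
    {i : Fin n} {j : Fin 3} (hx : x i = γ → m ≤ j) (hy : y i = γ → m ≤ Nat.dist j 1)
    (hz : z i = γ → m ≤ Nat.dist j 2)
    (hhub : m ≤ j + 1 + distToSet (Palm n fun _ => 3) hub (levelColor x y z ⁻¹' {γ})) :
    m ≤ distToSet (Palm n fun _ => 3) (leg i j) (levelColor x y z ⁻¹' {γ}) := by
  refine le_distToSet_leg hS (fun j' hj' => ?_) hhub
  fin_cases j' <;> simp at hj'
  · rw [Nat.dist_zero_right]
    exact hx hj'
  · exact hy hj'
  · exact hz hj'

theorem IsLevelColoring.distToSet_leg_zero (H : IsLevelColoring a b x y z) (i : Fin n)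
    (j : Fin 3) : distToSet (Palm n fun _ => 3) (leg i j) (levelColor x y z ⁻¹' {0}) =
      if y i = 0 then Nat.dist j 1 else j + 1 := by
  have hhub : hub ∈ levelColor x y z ⁻¹' {0} := rfl
  have h0 := distToSet_eq_zero_of_mem (G := Palm n fun _ => 3) hhub
  have := H.bounds i
  apply le_antisymm
  · split_ifs with hy
    · exact (distToSet_le_pathLength (w := leg i 1) (by simp [hy])).trans (by simp)
    · exact (distToSet_le_pathLength hhub).trans (by simp)
  · refine le_distToSet_leg_levelColor ⟨_, hhub⟩ (by omega) ?_ (by omega) ?_ <;>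
      unfold Nat.dist <;> split_ifs <;> omega

theorem IsLevelColoring.resolves_hub_leg (H : IsLevelColoring a b x y z) (i : Fin n)
    (j : Fin 3) : Resolves (Palm n fun _ => 3) (levelColor x y z) hub (leg i j) := by
  have := H.bounds i
  by_cases hj : (j : ℕ) = 0
  · refine ⟨0, ?_⟩
    rw [distToSet_eq_zero_of_mem (u := hub) (by simp), H.distToSet_leg_zero]
    unfold Nat.dist
    split_ifs <;> omega
  · have hz : leg i 2 ∈ levelColor x y z ⁻¹' {z i} := by simp
    have h1 := distToSet_le_pathLength (u := leg i j) hz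
    have h2 := H.two_le_distToSet_hub (by omega) ⟨_, hz⟩
    refine ⟨z i, ne_of_gt ?_⟩
    simp only [pathLength_leg_leg_self, Nat.dist] at h1
    omega

theorem IsLevelColoring.resolves_of_level_ne (H : IsLevelColoring a b x y z) (i i' : Fin n)
    {j j' : Fin 3} (hj : j ≠ j') :
    Resolves (Palm n fun _ => 3) (levelColor x y z) (leg i j) (leg i' j') := by
  -- colour 0 separates all levels but 0 and 2, which are separated by the level-0 colour
  by_cases h0 : distToSet (Palm n fun _ => 3) (leg i j) (levelColor x y z ⁻¹' {0}) =
      distToSet (Palm n fun _ => 3) (leg i' j') (levelColor x y z ⁻¹' {0})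
  swap
  · exact ⟨0, h0⟩
  have := H.bounds i
  have := H.bounds i'
  have hlevels : (j = 0 ∧ j' = 2) ∨ (j = 2 ∧ j' = 0) := by
    rw [H.distToSet_leg_zero, H.distToSet_leg_zero] at h0
    have := Fin.val_ne_of_ne hj
    have := j.isLt
    have := j'.isLt
    simp only [Fin.ext_iff]
    unfold Nat.dist at h0
    split_ifs at h0 <;> omega
  rcases hlevels with ⟨rfl, rfl⟩ | ⟨rfl, rfl⟩
  · exact ⟨x i, distToSet_ne_of_mem_of_notMem connected (by simp) (by simp; omega)⟩
  · exact ⟨x i', (distToSet_ne_of_mem_of_notMem connected (by simp) (by simp; omega)).symm⟩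

theorem IsLevelColoring.resolves_of_x_ne (H : IsLevelColoring a b x y z) {i i' : Fin n}
    (hx : x i ≠ x i') (j : Fin 3) :
    Resolves (Palm n fun _ => 3) (levelColor x y z) (leg i j) (leg i' j) := by
  have := H.bounds i
  have := H.bounds i'
  have hS : leg i 0 ∈ levelColor x y z ⁻¹' {x i} := by simp
  have hi : distToSet (Palm n fun _ => 3) (leg i j) (levelColor x y z ⁻¹' {x i}) ≤ j :=
    (distToSet_le_pathLength hS).trans (by simp [Nat.dist_zero_right])
  refine ⟨x i, ?_⟩
  -- leg `i'` meets colour `x i` at most at its middle vertex, otherwise only beyond the hub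
  by_cases hy : y i' = x i
  · have hi' : j ≤ distToSet (Palm n fun _ => 3) (leg i j) (levelColor x y z ⁻¹' {x i}) :=
      le_distToSet_leg_levelColor ⟨_, hS⟩ (fun _ => le_rfl) (by omega) (by omega) (by omega)
    have hlo : Nat.dist j 1 ≤
        distToSet (Palm n fun _ => 3) (leg i' j) (levelColor x y z ⁻¹' {x i}) :=
      le_distToSet_leg_levelColor ⟨_, hS⟩ (by omega) (fun _ => le_rfl) (by omega)
        (by unfold Nat.dist; omega)
    have hup : distToSet (Palm n fun _ => 3) (leg i' j) (levelColor x y z ⁻¹' {x i}) ≤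
        Nat.dist j 1 :=
      (distToSet_le_pathLength (w := leg i' 1) (by simp [hy])).trans (by simp)
    have := j.isLt
    unfold Nat.dist at hlo hup
    omega
  · have : j + 1 ≤ distToSet (Palm n fun _ => 3) (leg i' j) (levelColor x y z ⁻¹' {x i}) :=
      le_distToSet_leg_levelColor ⟨_, hS⟩ (by omega) (by omega) (by omega) (by omega)
    omega

theorem IsLevelColoring.resolves_of_y_ne (H : IsLevelColoring a b x y z) {i i' : Fin n}
    (hx : x i = x i') (hy : y i ≠ y i') (hy0 : y i ≠ 0) (j : Fin 3) :
    Resolves (Palm n fun _ => 3) (levelColor x y z) (leg i j) (leg i' j) := by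
  have := H.bounds i
  have := H.bounds i'
  have hS : leg i 1 ∈ levelColor x y z ⁻¹' {y i} := by simp
  refine ⟨y i, ?_⟩
  by_cases hz : (j : ℕ) = 2 ∧ z i' = y i
  · obtain rfl : j = 2 := Fin.ext hz.1
    exact (distToSet_ne_of_mem_of_notMem connected (by simp [hz.2]) (by simp; omega)).symm
  · have hi : distToSet (Palm n fun _ => 3) (leg i j) (levelColor x y z ⁻¹' {y i}) ≤
        Nat.dist j 1 :=
      (distToSet_le_pathLength hS).trans (by simp)
    have hhub := one_le_distToSet_of_notMem (v := hub) connected ⟨_, hS⟩ (by simp; omega)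
    have : Nat.dist j 1 + 1 ≤
        distToSet (Palm n fun _ => 3) (leg i' j) (levelColor x y z ⁻¹' {y i}) :=
      le_distToSet_leg_levelColor ⟨_, hS⟩ (by omega) (by omega) (by unfold Nat.dist; omega)
        (by unfold Nat.dist; omega)
    omega

theorem IsLevelColoring.resolves_of_z_ne (H : IsLevelColoring a b x y z) {i i' : Fin n}
    (hx : x i = x i') (hy : y i = y i') (hz : z i ≠ z i') (j : Fin 3) :
    Resolves (Palm n fun _ => 3) (levelColor x y z) (leg i j) (leg i' j) := by
  have := H.bounds i
  have := H.bounds i'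
  have hS : leg i 2 ∈ levelColor x y z ⁻¹' {z i} := by simp
  have hi : distToSet (Palm n fun _ => 3) (leg i j) (levelColor x y z ⁻¹' {z i}) ≤
      Nat.dist j 2 :=
    (distToSet_le_pathLength hS).trans (by simp)
  have hhub := H.two_le_distToSet_hub (by omega) ⟨_, hS⟩
  have : Nat.dist j 2 + 1 ≤
      distToSet (Palm n fun _ => 3) (leg i' j) (levelColor x y z ⁻¹' {z i}) :=
    le_distToSet_leg_levelColor ⟨_, hS⟩ (by omega) (by omega) (by omega)
      (by unfold Nat.dist; omega)
  exact ⟨z i, by omega⟩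

theorem IsLevelColoring.resolves (H : IsLevelColoring a b x y z)
    {u v : PalmVert n fun _ => 3} (huv : u ≠ v) :
    Resolves (Palm n fun _ => 3) (levelColor x y z) u v := by
  induction u using vert_cases with
  | hub => induction v using vert_cases with
    | hub => exact absurd rfl huv
    | leg i j => exact H.resolves_hub_leg i j
  | leg i j => induction v using vert_cases with
    | hub => exact (H.resolves_hub_leg i j).symm
    | leg i' j' =>
      by_cases hj : j = j'
      · subst hj
        have hi : i ≠ i' := by
          rintro rfl
          exact huv rfl
        by_cases hx : x i = x i'
        · by_cases hy : y i = y i'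
          · exact H.resolves_of_z_ne hx hy (fun hz => hi (H.injective (by simp [hx, hy, hz]))) j
          · by_cases hy0 : y i = 0
            · exact (H.resolves_of_y_ne hx.symm (Ne.symm hy) (by omega) j).symm
            · exact H.resolves_of_y_ne hx hy hy0 j
        · exact H.resolves_of_x_ne hx j
      · exact H.resolves_of_level_ne i i' hj

theorem IsLevelColoring.levelColor_ne_of_adj (H : IsLevelColoring a b x y z)
    {u v : PalmVert n fun _ => 3} (h : (Palm n fun _ => 3).Adj u v) :
    levelColor x y z u ≠ levelColor x y z v := by
  induction u using vert_cases with
  | hub => induction v using vert_cases with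
    | hub => exact absurd h ((Palm _ _).loopless.irrefl _)
    | leg i j =>
      have := H.bounds i
      obtain rfl : j = 0 := Fin.ext (adj_hub_leg_iff.mp h)
      simp
      omega
  | leg i j => induction v using vert_cases with
    | hub =>
      have := H.bounds i
      obtain rfl : j = 0 := Fin.ext (adj_hub_leg_iff.mp h.symm)
      simp
      omega
    | leg i' j' =>
      obtain ⟨rfl, hj⟩ := adj_leg_leg_iff.mp h
      have := H.bounds i
      fin_cases j <;> fin_cases j' <;> simp at hj ⊢ <;> omega

theorem IsLevelColoring.isLocatingColoring (H : IsLevelColoring a b x y z) {k : ℕ}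
    (hk : a + b + 1 ≤ k) :
    IsLocatingColoring (Palm n fun _ => 3)
      (fun v => (⟨levelColor x y z v, (H.levelColor_lt v).trans_le hk⟩ : Fin k)) :=
  ⟨fun _ _ h he => H.levelColor_ne_of_adj h (Fin.mk.inj he),
    fun _ _ huv => (H.resolves huv).finLift _⟩

end LevelColoring

theorem exists_isLevelColoring {n a b : ℕ} (h : n ≤ a * b * (a + b - 1)) :
    ∃ x y z : Fin n → ℕ, IsLevelColoring a b x y z := by
  obtain ⟨e⟩ := Function.Embedding.nonempty_of_card_le
    (α := Fin n) (β := Fin a × Fin b × Fin (a + b - 1)) (by simpa [mul_assoc] using h)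
  -- the `m`-th natural number different from `x` and `z`, where `x < z`
  let skip (x z m : ℕ) : ℕ := if m < x then m else if m + 1 < z then m + 1 else m + 2
  refine ⟨fun i => (e i).1 + 1, fun i => skip ((e i).1 + 1) (a + 1 + (e i).2.1) (e i).2.2,
    fun i => a + 1 + (e i).2.1, ⟨fun i => ?_, fun i i' hii => e.injective ?_⟩⟩
  · have := (e i).1.isLt
    have := (e i).2.1.isLt
    have := (e i).2.2.isLt
    simp only [skip]
    split_ifs <;> omega
  · simp only [Prod.mk.injEq, skip] at hii
    obtain ⟨h1, h2, h3⟩ := hii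
    have := (e i).2.2.isLt
    have := (e i').2.2.isLt
    refine Prod.ext (Fin.ext (by omega)) (Prod.ext (Fin.ext (by omega)) (Fin.ext ?_))
    split_ifs at h2 <;> omega

theorem exists_isLocatingColoring_of_four_mul_le_cube {n m : ℕ} (h : 4 * n ≤ m ^ 3) :
    ∃ c : PalmVert n (fun _ => 3) → Fin (m + 2), IsLocatingColoring (Palm n fun _ => 3) c := by
  -- split the `m + 1` colours other than `0` as evenly as possible between levels 0 and 2
  obtain ⟨a, b, hab, hn⟩ : ∃ a b, a + b = m + 1 ∧ n ≤ a * b * (a + b - 1) := by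
    obtain ⟨t, rfl | rfl⟩ := Nat.even_or_odd' m
    · refine ⟨t, t + 1, by ring, ?_⟩
      rw [show t + (t + 1) - 1 = 2 * t by omega]
      nlinarith
    · refine ⟨t + 1, t + 1, by ring, ?_⟩
      rw [show t + 1 + (t + 1) - 1 = 2 * t + 1 by omega]
      nlinarith
  obtain ⟨x, y, z, H⟩ := exists_isLevelColoring hn
  exact ⟨_, H.isLocatingColoring (by omega)⟩

section LowerBound

variable {n k : ℕ} {c : PalmVert n (fun _ => 3) → Fin k}

/-- The colours of the first two vertices of leg `i`, and the colour of the third one when its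
class is at distance at least `2` from the hub (otherwise the route through the hub is as short
as the one along the leg, and that colour carries no information). -/
noncomputable def legSignature (c : PalmVert n (fun _ => 3) → Fin k) (i : Fin n) :
    Fin k × Fin k × Option (Fin k) :=
  (c (leg i 0), c (leg i 1),
    if 2 ≤ distToSet (Palm n fun _ => 3) hub (c ⁻¹' {c (leg i 2)}) then some (c (leg i 2))
    else none)

theorem distToSet_leg_zero_eq (i : Fin n) {γ : Fin k} (hS : (c ⁻¹' {γ}).Nonempty) :
    distToSet (Palm n fun _ => 3) (leg i 0) (c ⁻¹' {γ}) =
      if γ = (legSignature c i).1 then 0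
      else if γ = (legSignature c i).2.1 then 1
      else if (legSignature c i).2.2 = some γ then 2
      else distToSet (Palm n fun _ => 3) hub (c ⁻¹' {γ}) + 1 := by
  have hleg : ∀ m, γ ≠ c (leg i 0) → γ ≠ c (leg i 1) → (c (leg i 2) = γ → m ≤ 2) →
      m ≤ 1 + distToSet (Palm n fun _ => 3) hub (c ⁻¹' {γ}) →
      m ≤ distToSet (Palm n fun _ => 3) (leg i 0) (c ⁻¹' {γ}) := fun m h0 h1 h2 hhub =>
    le_distToSet_leg hS (fun j' hj' => by
      fin_cases j' <;> simp at hj' ⊢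
      exacts [absurd hj'.symm h0, absurd hj'.symm h1, h2 hj']) (by simpa using hhub)
  split_ifs with h0 h1 h2
  · exact distToSet_eq_zero_of_mem h0.symm
  · exact le_antisymm ((distToSet_le_pathLength (w := leg i 1) h1.symm).trans (by simp [Nat.dist]))
      (one_le_distToSet_of_notMem connected hS (Ne.symm h0))
  · simp only [legSignature, Option.ite_none_right_eq_some, Option.some.injEq] at h2
    obtain ⟨hh, rfl⟩ := h2
    exact le_antisymm ((distToSet_le_pathLength (show leg i 2 ∈ c ⁻¹' {c (leg i 2)} from rfl)).trans
      (by simp [Nat.dist]))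
      (hleg 2 h0 h1 (fun _ => le_rfl) (by omega))
  · simp only [legSignature, Option.ite_none_right_eq_some, Option.some.injEq, not_and] at h2
    refine le_antisymm ((distToSet_leg_le hS i 0).trans (by simp; omega))
      (hleg _ h0 h1 (fun h => ?_) (by omega))
    subst h
    have := not_le.mp fun hh => h2 hh rfl
    omega

theorem IsLocatingColoring.legSignature_injective
    (hc : IsLocatingColoring (Palm n fun _ => 3) c) : Function.Injective (legSignature c) := by
  intro i i' he
  by_contra hi
  obtain ⟨γ, hγ⟩ := hc.2 (leg i 0) (leg i' 0) (leg_ne_leg hi 0 0)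
  rcases (c ⁻¹' {γ}).eq_empty_or_nonempty with hS | hS
  · simp [hS, distToSet_empty] at hγ
  · rw [distToSet_leg_zero_eq i hS, distToSet_leg_zero_eq i' hS, he] at hγ
    exact hγ rfl

open Finset in
theorem IsLocatingColoring.four_mul_le_cube (hc : IsLocatingColoring (Palm n fun _ => 3) c) :
    4 * n ≤ k ^ 3 := by
  classical
  set h : Fin k → ℕ := fun γ => distToSet (Palm n fun _ => 3) hub (c ⁻¹' {γ})
  set A := univ.filter fun γ => h γ = 1
  set B := univ.filter fun γ => 2 ≤ h γ
  have hmaps : ∀ i, legSignature c i ∈ A ×ˢ (univ ×ˢ B.insertNone) := by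
    intro i
    have h1 : h (c (leg i 0)) = 1 :=
      le_antisymm ((distToSet_le_pathLength (show leg i 0 ∈ c ⁻¹' {c (leg i 0)} from rfl)).trans
        (by simp)) (one_le_distToSet_of_notMem connected ⟨_, rfl⟩
          (hc.1 _ _ (adj_hub_leg_iff.mpr rfl)))
    simp only [legSignature, mem_product, mem_filter, mem_univ, true_and, and_true, A, B, h1,
      mem_insertNone]
    split_ifs with h2
    · simpa using h2
    · simp
  have hn : n ≤ #A * (k * (#B + 1)) := by
    simpa [card_product, card_insertNone] using
      card_le_card_of_injOn (s := univ) _ (fun i _ => hmaps i) hc.legSignature_injective.injOn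
  have hAB : #A + #B + 1 ≤ k := by
    have hdisj : Disjoint A B := disjoint_filter.mpr fun _ _ h1 h2 => by omega
    have hsub : A ∪ B ⊆ univ.erase (c hub) := by
      intro γ hγ
      have h0 : h (c hub) = 0 := distToSet_eq_zero_of_mem rfl
      simp only [mem_union, mem_filter, mem_univ, true_and, A, B] at hγ
      exact mem_erase.mpr ⟨by rintro rfl; omega, mem_univ _⟩
    have := card_le_card hsub
    rw [card_union_of_disjoint hdisj, card_erase_of_mem (mem_univ _), card_univ,
      Fintype.card_fin] at this
    have := (c hub).pos
    omega
  calc 4 * n ≤ 4 * #A * (#B + 1) * k := by nlinarith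
    _ ≤ (#A + (#B + 1)) ^ 2 * k := Nat.mul_le_mul_right _ (four_mul_le_sq_add _ _)
    _ ≤ k ^ 2 * k := Nat.mul_le_mul_right _ (Nat.pow_le_pow_left (by omega) 2)
    _ = k ^ 3 := by ring

end LowerBound

theorem locatingChromaticNumber_le_of_four_mul_le_cube {n m : ℕ} (h : 4 * n ≤ m ^ 3) :
    locatingChromaticNumber (Palm n fun _ => 3) ≤ m + 2 :=
  Nat.sInf_le (exists_isLocatingColoring_of_four_mul_le_cube h)

theorem four_mul_le_locatingChromaticNumber_cube (n : ℕ) :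
    4 * n ≤ locatingChromaticNumber (Palm n fun _ => 3) ^ 3 := by
  have hne : 4 * n ≤ (4 * n) ^ 3 := Nat.le_self_pow (by norm_num) _
  obtain ⟨c, hc⟩ := Nat.sInf_mem (s := {k | ∃ c : PalmVert n (fun _ => 3) → Fin k,
    IsLocatingColoring (Palm n fun _ => 3) c})
    ⟨_, exists_isLocatingColoring_of_four_mul_le_cube hne⟩
  exact hc.four_mul_le_cube

theorem pow_three_rpow_one_third {x : ℝ} (hx : 0 ≤ x) : (x ^ 3) ^ ((1 : ℝ) / 3) = x := by
  rw [show (1 : ℝ) / 3 = ((3 : ℕ) : ℝ)⁻¹ by norm_num]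
  exact Real.pow_rpow_inv_natCast hx three_ne_zero

theorem rpow_one_third_pow_three {x : ℝ} (hx : 0 ≤ x) : (x ^ ((1 : ℝ) / 3)) ^ 3 = x := by
  rw [show (1 : ℝ) / 3 = ((3 : ℕ) : ℝ)⁻¹ by norm_num]
  exact Real.rpow_inv_natCast_pow hx three_ne_zero

theorem cbrt_four_mul_le_locatingChromaticNumber (n : ℕ) :
    (4 * (n : ℝ)) ^ ((1 : ℝ) / 3) ≤ locatingChromaticNumber (Palm n fun _ => 3) := by
  have h : 4 * (n : ℝ) ≤ (locatingChromaticNumber (Palm n fun _ => 3) : ℝ) ^ 3 := by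
    exact_mod_cast four_mul_le_locatingChromaticNumber_cube n
  calc (4 * (n : ℝ)) ^ ((1 : ℝ) / 3)
      ≤ ((locatingChromaticNumber (Palm n fun _ => 3) : ℝ) ^ 3) ^ ((1 : ℝ) / 3) :=
        Real.rpow_le_rpow (by positivity) h (by norm_num)
    _ = locatingChromaticNumber (Palm n fun _ => 3) := pow_three_rpow_one_third (by positivity)

theorem locatingChromaticNumber_le_cbrt_four_mul_add (n : ℕ) :
    (locatingChromaticNumber (Palm n fun _ => 3) : ℝ) ≤ (4 * (n : ℝ)) ^ ((1 : ℝ) / 3) + 4 := by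
  set r := (4 * (n : ℝ)) ^ ((1 : ℝ) / 3)
  have hr : 0 ≤ r := by positivity
  have hr3 : r ^ 3 = 4 * n := rpow_one_third_pow_three (by positivity)
  have hcube : 4 * n ≤ (⌈r⌉₊ + 1) ^ 3 := by
    have : r ^ 3 ≤ ((⌈r⌉₊ + 1 : ℕ) : ℝ) ^ 3 :=
      pow_le_pow_left₀ hr ((Nat.le_ceil r).trans (by simp)) 3
    exact_mod_cast hr3 ▸ this
  have := Nat.ceil_lt_add_one hr
  calc (locatingChromaticNumber (Palm n fun _ => 3) : ℝ) ≤ ((⌈r⌉₊ + 1 + 2 : ℕ) : ℝ) := by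
        exact_mod_cast locatingChromaticNumber_le_of_four_mul_le_cube hcube
    _ ≤ r + 4 := by push_cast; linarith

open Filter Topology in
theorem tendsto_div_of_le_of_le_add {α : Type*} {l : Filter α} {f g : α → ℝ} (C : ℝ)
    (hg : Tendsto g l atTop) (hlo : ∀ᶠ x in l, g x ≤ f x) (hup : ∀ᶠ x in l, f x ≤ g x + C) :
    Tendsto (fun x => f x / g x) l (𝓝 1) := by
  have hC : Tendsto (fun x => 1 + C / g x) l (𝓝 1) := by
    simpa [div_eq_mul_inv] using (hg.inv_tendsto_atTop.const_mul C).const_add 1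
  refine tendsto_of_tendsto_of_tendsto_of_le_of_le' tendsto_const_nhds hC ?_ ?_
  · filter_upwards [hlo, hg.eventually_gt_atTop 0] with x h hpos
    rwa [le_div_iff₀ hpos, one_mul]
  · filter_upwards [hup, hg.eventually_gt_atTop 0] with x h hpos
    rwa [div_le_iff₀ hpos, add_mul, div_mul_cancel₀ _ hpos.ne', one_mul]

/-- `χ_L(S_n(3)) = (1 + o(1))·(4n)^{1/3}` as `n → ∞`, i.e.
`lim_{n→∞} χ_L(S_n(3)) / (4n)^{1/3} = 1`. -/
theorem locatingChromaticNumber_regularPalm_three_asymptotic :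
    Filter.Tendsto
      (fun n : ℕ =>
        (locatingChromaticNumber (Palm n (fun _ => 3)) : ℝ) /
          (4 * (n : ℝ)) ^ ((1 : ℝ) / 3))
      Filter.atTop (nhds 1) :=
  tendsto_div_of_le_of_le_add 4
    ((tendsto_rpow_atTop (by norm_num)).comp
      (tendsto_natCast_atTop_atTop.const_mul_atTop (by norm_num)))
    (.of_forall cbrt_four_mul_le_locatingChromaticNumber)
    (.of_forall locatingChromaticNumber_le_cbrt_four_mul_add)
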